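/- Let G be a König-Egerváry graph. Then the following three statements are equivalent: (i) ξ(G) + η(G) = α(G); (ii) σ(G) + η(G) = μ(G); (iii) ξ(G) + 2η(G) + σ(G) = |V(G)|. -/

import Mathlib

open scoped Classical

namespace KEG

variable {V : Type*}

/-- `S` is a stable (independent) set of vertices of `G`. -/
def IsStable (G : SimpleGraph V) (S : Finset V) : Prop :=
  ∀ ⦃x⦄, x ∈ S → ∀ ⦃y⦄, y ∈ S → ¬G.Adj x y

/-- The stability number `α(G)`: maximum cardinality of a stable set. -/
noncomputable def alphaNum (G : SimpleGraph V) : ℕ :=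
  sSup {n | ∃ S : Finset V, IsStable G S ∧ S.card = n}

/-- `S` is a maximum stable set of `G`. -/
def IsMaxStable (G : SimpleGraph V) (S : Finset V) : Prop :=
  IsStable G S ∧ S.card = alphaNum G

/-- `M` is a matching of `G`: a set of edges of `G`, pairwise non-incident. -/
def IsMatching (G : SimpleGraph V) (M : Finset (Sym2 V)) : Prop :=
  (∀ e ∈ M, e ∈ G.edgeSet) ∧
    ∀ e ∈ M, ∀ f ∈ M, e ≠ f → ∀ v : V, v ∈ e → v ∉ f

/-- The matching number `μ(G)`: maximum cardinality of a matching. -/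
noncomputable def muNum (G : SimpleGraph V) : ℕ :=
  sSup {n | ∃ M : Finset (Sym2 V), IsMatching G M ∧ M.card = n}

/-- A perfect matching: a matching covering every vertex. -/
def IsPerfectMatching (G : SimpleGraph V) (M : Finset (Sym2 V)) : Prop :=
  IsMatching G M ∧ ∀ v : V, ∃ e ∈ M, v ∈ e

/-- A maximal matching: a matching such that no edge of `G` can be added to it
while keeping pairwise non-incidence, i.e. every edge of `G` outside `M` is
incident to an edge of `M`. -/
def IsMaximalMatching (G : SimpleGraph V) (M : Finset (Sym2 V)) : Prop :=
  IsMatching G M ∧ ∀ e ∈ G.edgeSet, e ∉ M → ∃ f ∈ M, ∃ v : V, v ∈ e ∧ v ∈ f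

/-- `G` is a König-Egerváry graph: `α(G) + μ(G) = |V(G)|`. -/
def KonigEgervary (G : SimpleGraph V) [Fintype V] : Prop :=
  alphaNum G + muNum G = Fintype.card V

/-- `e` is an α-critical edge of `G`: `α(G - e) > α(G)`. -/
def IsAlphaCritical (G : SimpleGraph V) (e : Sym2 V) : Prop :=
  e ∈ G.edgeSet ∧ alphaNum G < alphaNum (G.deleteEdges {e})

/-- `e` is a μ-critical edge of `G`: `μ(G - e) < μ(G)`. -/
def IsMuCritical (G : SimpleGraph V) (e : Sym2 V) : Prop :=
  e ∈ G.edgeSet ∧ muNum (G.deleteEdges {e}) < muNum G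

/-- `core(G)`: the set of vertices belonging to every maximum stable set of `G`. -/
def core (G : SimpleGraph V) : Set V :=
  {v | ∀ S : Finset V, IsMaxStable G S → v ∈ S}

/-- `ξ(G) = |core(G)|`. -/
noncomputable def xi (G : SimpleGraph V) : ℕ := (core G).ncard

/-- `σ(G)`: the number of vertices belonging to no maximum stable set of `G`. -/
noncomputable def sigmaNum (G : SimpleGraph V) : ℕ :=
  {v : V | ∀ S : Finset V, IsMaxStable G S → v ∉ S}.ncard

/-- `η(G)`: the number of α-critical edges of `G`. -/
noncomputable def eta (G : SimpleGraph V) : ℕ :=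
  {e : Sym2 V | IsAlphaCritical G e}.ncard

/-- `N(A)`: the set of vertices adjacent to some vertex of `A`. -/
def nbhd (G : SimpleGraph V) (A : Set V) : Set V :=
  {v | ∃ a ∈ A, G.Adj a v}

/-- `N[A] = A ∪ N(A)`: the closed neighborhood of `A`. -/
def closedNbhd (G : SimpleGraph V) (A : Set V) : Set V :=
  A ∪ nbhd G A

/-!
Fix a maximum stable set `S` and a maximum matching `M` of a König-Egerváry graph. Since
`|M| = |V| - α = |Sᶜ|`, every edge of `M` has exactly one endpoint in `S` and `M` covers `Sᶜ`;
as this holds for every maximum stable set, matching partners swap "lies in every maximum stable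
set" with "lies in none". Hence `M` pairs `S \ core G` with the vertices outside `S` that lie in
some maximum stable set, so `α - ξ = μ - σ`. Together with `α + μ = |V|`, each of the three
equalities then says `η = α - ξ`.
-/

lemma exists_isMaxStable [Fintype V] (G : SimpleGraph V) :
    ∃ S : Finset V, IsMaxStable G S := by
  obtain ⟨S, hS, hc⟩ := Nat.sSup_mem (s := {n | ∃ S : Finset V, IsStable G S ∧ S.card = n})
    ⟨0, ∅, by simp [IsStable]⟩ ⟨Fintype.card V, by rintro _ ⟨S, -, rfl⟩; exact S.card_le_univ⟩
  exact ⟨S, hS, hc⟩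

lemma exists_isMatching_card_eq_muNum [Fintype V] (G : SimpleGraph V) :
    ∃ M : Finset (Sym2 V), IsMatching G M ∧ M.card = muNum G :=
  Nat.sSup_mem (s := {n | ∃ M : Finset (Sym2 V), IsMatching G M ∧ M.card = n})
    ⟨0, ∅, by simp [IsMatching]⟩
    ⟨Fintype.card (Sym2 V), by rintro _ ⟨M, -, rfl⟩; exact M.card_le_univ⟩

lemma IsStable.exists_mem_notMem {G : SimpleGraph V} {S : Finset V} (hS : IsStable G S)
    {e : Sym2 V} (he : e ∈ G.edgeSet) : ∃ v ∈ e, v ∉ S := by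
  induction e using Sym2.ind with
  | _ a b =>
    by_contra! h
    exact hS (h a (Sym2.mem_mk_left a b)) (h b (Sym2.mem_mk_right a b)) he

namespace IsMatching

variable {G : SimpleGraph V} {M : Finset (Sym2 V)}

lemma eq_of_mk_mem (hM : IsMatching G M) {u v w : V} (hv : s(u, v) ∈ M) (hw : s(u, w) ∈ M) :
    v = w := by
  by_contra hne
  exact hM.2 _ hv _ hw (by rwa [Ne, Sym2.congr_right]) u (Sym2.mem_mk_left u v)
    (Sym2.mem_mk_left u w)

lemma card_le_card (hM : IsMatching G M) {s t : Finset V}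
    (h : ∀ a ∈ s, ∃ b ∈ t, s(a, b) ∈ M) : s.card ≤ t.card :=
  Finset.card_le_card_of_forall_subsingleton (fun a b ↦ s(a, b) ∈ M) h
    fun _ _ _ ⟨_, h₁⟩ _ ⟨_, h₂⟩ ↦ hM.eq_of_mk_mem (Sym2.eq_swap ▸ h₁) (Sym2.eq_swap ▸ h₂)

end IsMatching

def corona (G : SimpleGraph V) : Set V :=
  {v | ∃ S : Finset V, IsMaxStable G S ∧ v ∈ S}

lemma sigmaNum_eq_ncard_compl_corona (G : SimpleGraph V) :
    sigmaNum G = (corona G)ᶜ.ncard := by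
  rw [sigmaNum]; congr 1; ext; simp [corona]

namespace KonigEgervary

variable [Fintype V] {G : SimpleGraph V} {M : Finset (Sym2 V)} {S : Finset V}

/-- Choosing for each edge of `M` an endpoint outside `S` injects `M` into `Sᶜ`, and
`|M| = |Sᶜ|` makes this injection onto. -/
lemma exists_mk_mem_of_notMem (hG : KonigEgervary G) (hM : IsMatching G M)
    (hMc : M.card = muNum G) (hS : IsMaxStable G S) {v : V} (hv : v ∉ S) :
    ∃ w, s(v, w) ∈ M ∧ w ∈ S := by
  choose out hout using fun e he ↦ hS.1.exists_mem_notMem (hM.1 e he)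
  have hsurj := Finset.surj_on_of_inj_on_of_card_le (t := Sᶜ) out
    (fun e he ↦ Finset.mem_compl.2 (hout e he).2)
    (fun e₁ e₂ h₁ h₂ h ↦ by_contra fun hne ↦
      hM.2 e₁ h₁ e₂ h₂ hne _ (hout e₁ h₁).1 (h ▸ (hout e₂ h₂).1))
    (by rw [Finset.card_compl, hMc, hS.2, ← hG]; omega)
  obtain ⟨e, he, rfl⟩ := hsurj v (Finset.mem_compl.2 hv)
  have hve := (hout e he).1
  refine ⟨Sym2.Mem.other hve, (Sym2.other_spec hve).symm ▸ he, by_contra fun hw ↦ ?_⟩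
  obtain ⟨e', he', hwe'⟩ := hsurj _ (Finset.mem_compl.2 hw)
  have : e' = e := by_contra fun hne ↦
    hM.2 e' he' e he hne _ (hwe' ▸ (hout e' he').1) (Sym2.other_mem hve)
  subst this
  have hadj : G.Adj (out e' he') (Sym2.Mem.other hve) := by
    rw [← SimpleGraph.mem_edgeSet, Sym2.other_spec]; exact hM.1 e' he'
  exact hadj.ne hwe'.symm

lemma mem_iff_notMem (hG : KonigEgervary G) (hM : IsMatching G M) (hMc : M.card = muNum G)
    (hS : IsMaxStable G S) {u w : V} (h : s(u, w) ∈ M) : u ∈ S ↔ w ∉ S := by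
  refine ⟨fun hu hw ↦ hS.1 hu hw (hM.1 _ h), fun hw ↦ by_contra fun hu ↦ ?_⟩
  obtain ⟨w', hw', hw'S⟩ := hG.exists_mk_mem_of_notMem hM hMc hS hu
  exact hw (hM.eq_of_mk_mem h hw' ▸ hw'S)

lemma exists_mk_mem_mem_corona (hG : KonigEgervary G) (hM : IsMatching G M)
    (hMc : M.card = muNum G) (hS : IsMaxStable G S) {u : V} (huS : u ∈ S) (hu : u ∉ core G) :
    ∃ w, s(u, w) ∈ M ∧ w ∉ S ∧ w ∈ corona G := by
  obtain ⟨S', hS', huS'⟩ : ∃ S', IsMaxStable G S' ∧ u ∉ S' := by simpa [core] using hu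
  obtain ⟨w, huw, hwS'⟩ := hG.exists_mk_mem_of_notMem hM hMc hS' huS'
  exact ⟨w, huw, (hG.mem_iff_notMem hM hMc hS huw).1 huS, S', hS', hwS'⟩

lemma exists_mk_mem_notMem_core (hG : KonigEgervary G) (hM : IsMatching G M)
    (hMc : M.card = muNum G) (hS : IsMaxStable G S) {w : V} (hwS : w ∉ S)
    (hw : w ∈ corona G) : ∃ u, s(w, u) ∈ M ∧ u ∈ S ∧ u ∉ core G := by
  obtain ⟨S', hS', hwS'⟩ := hw
  obtain ⟨u, hwu, huS⟩ := hG.exists_mk_mem_of_notMem hM hMc hS hwS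
  exact ⟨u, hwu, huS, fun hu ↦ (hG.mem_iff_notMem hM hMc hS' hwu).1 hwS' (hu S' hS')⟩

theorem alphaNum_add_sigmaNum_eq_muNum_add_xi (hG : KonigEgervary G) :
    alphaNum G + sigmaNum G = muNum G + xi G := by
  obtain ⟨S, hS⟩ := exists_isMaxStable G
  obtain ⟨M, hM, hMc⟩ := exists_isMatching_card_eq_muNum G
  have hcoreS : (core G).toFinset ⊆ S := fun v hv ↦ Set.mem_toFinset.1 hv S hS
  have hSc : (corona G)ᶜ.toFinset ⊆ Sᶜ := fun v hv ↦
    Finset.mem_compl.2 fun hvS ↦ Set.mem_toFinset.1 hv ⟨S, hS, hvS⟩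
  have hpair : (S \ (core G).toFinset).card = (Sᶜ \ (corona G)ᶜ.toFinset).card := by
    apply le_antisymm <;> refine hM.card_le_card fun v hv ↦ ?_ <;>
      simp only [Finset.mem_sdiff, Finset.mem_compl, Set.mem_toFinset, Set.mem_compl_iff,
        not_not] at hv ⊢
    · obtain ⟨w, hvw, hwS, hw⟩ := hG.exists_mk_mem_mem_corona hM hMc hS hv.1 hv.2
      exact ⟨w, ⟨hwS, hw⟩, hvw⟩
    · obtain ⟨u, hvu, huS, hu⟩ := hG.exists_mk_mem_notMem_core hM hMc hS hv.1 hv.2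
      exact ⟨u, ⟨huS, hu⟩, hvu⟩
  have hxi : xi G = (core G).toFinset.card := Set.ncard_eq_toFinset_card' _
  have hσ : sigmaNum G = (corona G)ᶜ.toFinset.card :=
    (sigmaNum_eq_ncard_compl_corona G).trans (Set.ncard_eq_toFinset_card' _)
  have hα := hS.2
  have hcard : alphaNum G + muNum G = Fintype.card V := hG
  have := Finset.card_sdiff_add_card_eq_card hcoreS
  have := Finset.card_sdiff_add_card_eq_card hSc
  have := Finset.card_compl S
  have := S.card_le_univ
  omega

end KonigEgervary

/-- In a König-Egerváry graph, the equalities `ξ + η = α`, `σ + η = μ` and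
`ξ + 2η + σ = |V(G)|` are equivalent. -/
theorem stmt_15 {V : Type*} [Fintype V] (G : SimpleGraph V)
    (hG : KonigEgervary G) :
    List.TFAE
      [xi G + eta G = alphaNum G,
       sigmaNum G + eta G = muNum G,
       xi G + 2 * eta G + sigmaNum G = Fintype.card V] := by
  have hkey := hG.alphaNum_add_sigmaNum_eq_muNum_add_xi
  have hcard : alphaNum G + muNum G = Fintype.card V := hG
  tfae_have 1 → 2 := fun _ ↦ by omega
  tfae_have 2 → 3 := fun _ ↦ by omega
  tfae_have 3 → 1 := fun _ ↦ by omega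
  tfae_finish

end KEG
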